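/- arXiv:math/0503253 — 9 statements merged into one kernel-verified Lean document; each statement's English description precedes it below -/
import Mathlib

section
/- If C and D are two distinct Seshadri exceptional curves based at the same point x of a smooth projective surface S (i.e., irreducible curves through x with C² < mult_x(C)² and D² < mult_x(D)²), then D does not lie in the closure of the influence area of C; concretely, the inequality (D·C)/mult_x(C) ≤ √(D²) is impossible. -/
/-- Abstract smooth projective surface over an algebraically closed field, recorded
through the real-valued intersection pairing of its irreducible curves, membership of
points in curves and multiplicities of curves at points, together with the standard
facts used: multiplicity of a curve at one of its points is `≥ 1`, and two distinct
irreducible curves through `x` satisfy `C·D ≥ mult_x(C)·mult_x(D)`. -/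
structure SurfaceData where
  Point : Type
  Curve : Type
  inter : Curve → Curve → ℝ
  inter_comm : ∀ C D, inter C D = inter D C
  mem : Point → Curve → Prop
  mult : Point → Curve → ℕ
  mult_pos : ∀ x C, mem x C → 1 ≤ mult x C
  inter_ge_mult : ∀ x (C D : Curve), C ≠ D → mem x C → mem x D →
    (mult x C : ℝ) * (mult x D : ℝ) ≤ inter C D

/-- `C` is a Seshadri exceptional curve based at `x`: an irreducible curve through `x`
with `C² < mult_x(C)²`. -/
def SurfaceData.exc (S : SurfaceData) (x : S.Point) (C : S.Curve) : Prop :=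
  S.mem x C ∧ S.inter C C < (S.mult x C : ℝ) ^ 2

/-- If `C` and `D` are distinct Seshadri exceptional curves based at the same point `x`,
then `D` does not lie in the closure of the influence area of `C`: the inequality
`(D·C)/mult_x(C) ≤ √(D²)` is impossible. -/
theorem stmt0 (S : SurfaceData) (x : S.Point) (C D : S.Curve)
    (hC : S.exc x C) (hD : S.exc x D) (hne : C ≠ D) :
    ¬ (S.inter D C / (S.mult x C : ℝ) ≤ Real.sqrt (S.inter D D)) := by
  intro h
  obtain ⟨hCx, _⟩ := hC
  obtain ⟨hDx, hD2⟩ := hD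
  have hmC : (0 : ℝ) < (S.mult x C : ℝ) := by
    exact_mod_cast S.mult_pos x C hCx
  have hmD : (0 : ℝ) < (S.mult x D : ℝ) := by
    exact_mod_cast S.mult_pos x D hDx
  have hge : (S.mult x C : ℝ) * (S.mult x D : ℝ) ≤ S.inter D C := by
    rw [S.inter_comm D C]
    exact S.inter_ge_mult x C D hne hCx hDx
  have h1 : (S.mult x D : ℝ) ≤ S.inter D C / (S.mult x C : ℝ) := by
    rw [le_div_iff₀ hmC]
    linarith [hge]
  have h2 : Real.sqrt (S.inter D D) < (S.mult x D : ℝ) :=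
    (Real.sqrt_lt' hmD).mpr hD2
  linarith
end

section
/- If C is a nef Seshadri exceptional curve based at a point x of a smooth projective surface, then the Seshadri constant of C at x equals C²/mult_x(C). -/
/-- A curve (divisor) is nef if it meets every irreducible curve nonnegatively. -/
def SurfaceData.nef (S : SurfaceData) (A : S.Curve) : Prop :=
  ∀ D : S.Curve, 0 ≤ S.inter A D

/-- The Seshadri constant of `A` at `x`: the infimum over irreducible curves `D`
through `x` of `(A·D)/mult_x(D)`. -/
noncomputable def SurfaceData.seshadri (S : SurfaceData) (A : S.Curve) (x : S.Point) : ℝ :=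
  sInf {r : ℝ | ∃ D : S.Curve, S.mem x D ∧ r = S.inter A D / (S.mult x D : ℝ)}

/-- If `C` is a nef Seshadri exceptional curve based at `x`, then the Seshadri constant
of `C` at `x` equals `C² / mult_x(C)`. -/
theorem stmt1 (S : SurfaceData) (x : S.Point) (C : S.Curve)
    (hC : S.exc x C) (hnef : S.nef C) :
    S.seshadri C x = S.inter C C / (S.mult x C : ℝ) := by
  obtain ⟨hmem, hexc⟩ := hC
  have hm : (1 : ℝ) ≤ (S.mult x C : ℝ) := by exact_mod_cast S.mult_pos x C hmem
  have hmpos : (0 : ℝ) < (S.mult x C : ℝ) := lt_of_lt_of_le one_pos hm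
  have hlb : ∀ r ∈ {r : ℝ | ∃ D : S.Curve, S.mem x D ∧ r = S.inter C D / (S.mult x D : ℝ)},
      S.inter C C / (S.mult x C : ℝ) ≤ r := by
    rintro r ⟨D, hD, rfl⟩
    have hmD : (1 : ℝ) ≤ (S.mult x D : ℝ) := by exact_mod_cast S.mult_pos x D hD
    have hmDpos : (0 : ℝ) < (S.mult x D : ℝ) := lt_of_lt_of_le one_pos hmD
    by_cases hEq : C = D
    · subst hEq; exact le_refl _
    · have h1 : (S.mult x C : ℝ) * (S.mult x D : ℝ) ≤ S.inter C D :=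
        S.inter_ge_mult x C D hEq hmem hD
      have h2 : (S.mult x C : ℝ) ≤ S.inter C D / (S.mult x D : ℝ) :=
        (le_div_iff₀ hmDpos).mpr h1
      have h3 : S.inter C C / (S.mult x C : ℝ) < (S.mult x C : ℝ) := by
        rw [div_lt_iff₀ hmpos]
        nlinarith
      linarith
  refine le_antisymm ?_ (le_csInf ⟨_, ⟨C, hmem, rfl⟩⟩ hlb)
  exact csInf_le ⟨_, hlb⟩ ⟨C, hmem, rfl⟩
end

section
/- On a geometrically ruled surface S = P(E) over a smooth curve with invariant e, a fibre f is a Seshadri exceptional curve at each of its points, and its influence area is exactly the set of nef divisors A ≡ aX₀ + bf with a > 0 and b − (1/2)ae > (1/2)a; i.e., A·f < √(A²) if and only if a > 0 and b − (1/2)ae > (1/2)a. -/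
/-- Intersection number of numerical classes `a X₀ + b f` on a geometrically ruled
surface with invariant `e`:  `(a,b)·(a',b') = ab' + a'b - e a a'`. -/
def inter (e : ℤ) (c d : ℤ × ℤ) : ℤ := c.1 * d.2 + c.2 * d.1 - e * c.1 * d.1

/-- Abstract geometrically ruled surface `S = P(E) → X` over a smooth curve, with
`Num(S) = ℤX₀ ⊕ ℤf`, recorded through the numerical class of each irreducible curve,
multiplicities of curves at points, and the standard intersection-theoretic facts. -/
structure RuledSurface where
  /-- the invariant `e` of the ruled surface -/
  e : ℤ
  /-- points of the surface -/
  Point : Type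
  /-- reduced irreducible curves on the surface -/
  Curve : Type
  /-- numerical class `(a, b)` of a curve, meaning `a X₀ + b f` -/
  num : Curve → ℤ × ℤ
  /-- the curve passes through the point -/
  mem : Point → Curve → Prop
  /-- multiplicity of a curve at a point -/
  mult : Point → Curve → ℕ
  mult_pos : ∀ x C, mem x C → 1 ≤ mult x C
  /-- two distinct irreducible curves through `x` satisfy `C·D ≥ mult_x C · mult_x D` -/
  inter_ge_mult : ∀ x (C D : Curve), C ≠ D → mem x C → mem x D →
    (mult x C : ℤ) * (mult x D : ℤ) ≤ inter e (num C) (num D)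
  /-- the fibre through a point -/
  fibre : Point → Curve
  fibre_num : ∀ x, num (fibre x) = (0, 1)
  fibre_mem : ∀ x, mem x (fibre x)
  fibre_mult : ∀ x, mult x (fibre x) = 1

/-- `C` is a Seshadri exceptional curve based at `x`: an irreducible curve through `x`
with `C² < mult_x(C)²`. -/
def RuledSurface.exc (S : RuledSurface) (x : S.Point) (C : S.Curve) : Prop :=
  S.mem x C ∧ inter S.e (S.num C) (S.num C) < (S.mult x C : ℤ) ^ 2

/-- The Seshadri constant of a divisor class `A` at `x`: the infimum of `A·C / mult_x C`
over irreducible curves `C` through `x`. -/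
noncomputable def RuledSurface.seshadri (S : RuledSurface) (A : ℤ × ℤ) (x : S.Point) : ℝ :=
  sInf {r : ℝ | ∃ C : S.Curve, S.mem x C ∧ r = (inter S.e A (S.num C) : ℝ) / (S.mult x C : ℝ)}

/-- On a geometrically ruled surface with invariant `e`, a fibre is a Seshadri
exceptional curve at each of its points, and for a nef divisor `A ≡ aX₀ + bf`
(so `a ≥ 0` and `2b - ae ≥ 0`), one has `A·f < √(A²)` if and only if `a > 0`
and `b - (1/2)ae > (1/2)a`. -/
theorem stmt2 (S : RuledSurface) :
    (∀ x : S.Point, S.exc x (S.fibre x)) ∧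
    (∀ A : ℤ × ℤ, 0 ≤ A.1 → A.1 * S.e ≤ 2 * A.2 →
      ((inter S.e A (0, 1) : ℝ) < Real.sqrt ((inter S.e A A : ℝ)) ↔
        0 < A.1 ∧ (A.1 : ℝ) / 2 < (A.2 : ℝ) - (A.1 : ℝ) * (S.e : ℝ) / 2)) := by
  constructor
  · intro x
    refine ⟨S.fibre_mem x, ?_⟩
    simp [inter, S.fibre_num, S.fibre_mult]
  · intro A ha hnef
    have hAf : inter S.e A (0,1) = A.1 := by simp [inter]
    have hAA : inter S.e A A = A.1 * (2 * A.2 - S.e * A.1) := by ring_nf; simp [inter]; ring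
    have ha' : (0:ℝ) ≤ (A.1:ℝ) := by exact_mod_cast ha
    rw [hAf, hAA]
    rw [Real.lt_sqrt ha']
    push_cast
    constructor
    · intro h
      have h1 : (0:ℝ) < (A.1:ℝ) := by
        by_contra hc
        push_neg at hc
        have : (A.1:ℝ) = 0 := le_antisymm hc ha'
        rw [this] at h; simp at h
      refine ⟨by exact_mod_cast h1, ?_⟩
      nlinarith
    · rintro ⟨h1, h2⟩
      have h1' : (0:ℝ) < (A.1:ℝ) := by exact_mod_cast h1
      nlinarith
end

section
/- Let C be a Seshadri exceptional curve based at a point x on a geometrically ruled surface, with C² > 0. Then √(C²) is irrational and mult_x(C) = ⌊√(C²)⌋ + 1. -/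
/-- A geometrically ruled surface over a smooth curve of genus `g > 0`, together with
arithmetic genera of curves, the adjunction formula, and the Hurwitz-type
multiplicity bound for `a`-secant curves with `a ≥ 2`. -/
structure RuledSurfaceG extends RuledSurface where
  g : ℤ
  g_pos : 0 < g
  pa : Curve → ℤ
  adjunction : ∀ C : Curve,
    2 * pa C - 2 = inter e (num C) (num C) + inter e (num C) (-2, 2 * g - 2 - e)
  hurwitz : ∀ (x : Point) (C : Curve), mem x C → 2 ≤ (num C).1 →
    (mult x C : ℤ) * ((mult x C : ℤ) - 1) ≤ 2 * pa C - 2 - (num C).1 * (2 * g - 2)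

/-- If `C` is a Seshadri exceptional curve based at `x` on a geometrically ruled
surface with `C² > 0`, then `√(C²)` is irrational and `mult_x(C) = ⌊√(C²)⌋ + 1`.
(Every irreducible curve is `a`-secant with `a ≥ 0`, and sections (`a = 1`) are
smooth, hence of multiplicity `1` at each of their points.) -/
theorem stmt5 (S : RuledSurfaceG) (x : S.Point) (C : S.Curve)
    (hanneg : ∀ D : S.Curve, 0 ≤ (S.num D).1)
    (hsection : ∀ (y : S.Point) (D : S.Curve), S.mem y D → (S.num D).1 = 1 →
      S.mult y D = 1)
    (hexc : S.toRuledSurface.exc x C)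
    (hpos : 0 < inter S.e (S.num C) (S.num C)) :
    Irrational (Real.sqrt ((inter S.e (S.num C) (S.num C) : ℝ))) ∧
    (S.mult x C : ℤ) = ⌊Real.sqrt ((inter S.e (S.num C) (S.num C) : ℝ))⌋ + 1 := by
  obtain ⟨hmem, hlt⟩ := hexc
  set d : ℤ := inter S.e (S.num C) (S.num C) with hd
  set m : ℤ := (S.mult x C : ℤ) with hm
  set a : ℤ := (S.num C).1 with ha
  set b : ℤ := (S.num C).2 with hb
  have hda : d = a * b + b * a - S.e * a * a := rfl
  have hm1 : 1 ≤ m := by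
    rw [hm]; exact_mod_cast S.mult_pos x C hmem
  have ha0 : 0 ≤ a := hanneg C
  have ha2 : 2 ≤ a := by
    rcases lt_or_ge a 2 with h | h
    · interval_cases a
      · omega
      · have := hsection x C hmem ha.symm
        rw [hm, this] at hlt
        norm_num at hlt
        omega
    · exact h
  have h2b : 1 ≤ 2 * b - S.e * a := by nlinarith
  have hhur := S.hurwitz x C hmem (by rw [← ha]; exact ha2)
  have hadj := S.adjunction C
  have hinter2 : inter S.e (S.num C) (-2, 2 * S.g - 2 - S.e)
      = a * (2 * S.g - 2) + S.e * a - 2 * b := by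
    simp only [inter, ha, hb]; ring
  rw [hinter2, ← hd] at hadj
  rw [← ha, ← hm] at hhur
  have hkey : m * (m - 1) < d := by omega
  have hlow : (m - 1) ^ 2 < d := by nlinarith
  have hup : d < m ^ 2 := hlt
  -- real estimates
  set r : ℝ := Real.sqrt ((d : ℤ) : ℝ) with hr
  have hdpos : (0 : ℝ) < (d : ℝ) := by exact_mod_cast hpos
  have hrsq : r ^ 2 = (d : ℝ) := Real.sq_sqrt hdpos.le
  have hm1R : (0 : ℝ) ≤ ((m : ℝ) - 1) := by
    have : (1 : ℝ) ≤ (m : ℝ) := by exact_mod_cast hm1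
    linarith
  have hrlow : ((m : ℝ) - 1) < r := by
    rw [hr, ← Real.sqrt_sq hm1R]
    apply Real.sqrt_lt_sqrt (by positivity)
    have : ((m - 1 : ℤ) : ℝ) ^ 2 < ((d : ℤ) : ℝ) := by exact_mod_cast hlow
    push_cast at this ⊢
    linarith
  have hrup : r < (m : ℝ) := by
    rw [hr]
    have hmpos : (0 : ℝ) < (m : ℝ) := by exact_mod_cast hm1
    rw [show (m : ℝ) = Real.sqrt ((m : ℝ) ^ 2) from (Real.sqrt_sq hmpos.le).symm]
    apply Real.sqrt_lt_sqrt hdpos.le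
    have : ((d : ℤ) : ℝ) < ((m : ℤ) : ℝ) ^ 2 := by exact_mod_cast hup
    push_cast at this ⊢
    linarith
  have hnotint : ¬∃ y : ℤ, r = y := by
    rintro ⟨y, hy⟩
    rw [hy] at hrlow hrup
    have h1 : m - 1 < y := by exact_mod_cast hrlow
    have h2 : y < m := by exact_mod_cast hrup
    omega
  constructor
  · exact irrational_nrt_of_notint_nrt 2 d hrsq hnotint two_pos
  · have hfloor : ⌊r⌋ = m - 1 := by
      rw [Int.floor_eq_iff]
      constructor
      · push_cast; linarith
      · push_cast; linarith
    rw [hfloor]; ring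
end

section
/- Let S be a geometrically ruled surface with invariant e and let C ≡ aX₀ + bf pass through x with multiplicity m. Under the elementary transformation of S at x, the strict transform C' on S' (with invariant e' and minimal section Y₀) satisfies C' ≡ aY₀ + (b − m + (a/2)(1 − e + e'))f and mult_{x'}(C') = a − m; consequently C'² − mult_{x'}(C')² = C² − mult_x(C)². In particular, C is Seshadri exceptional based at x if and only if C' is Seshadri exceptional based at x'. -/
/-- The elementary transformation of a geometrically ruled surface `S` at a point `x`:
a ruled surface `S'` with invariant `e'`, a distinguished point `x'`, and the strict
transform of curves, satisfying the standard facts: the fibre-degree is preserved,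
`mult_{x'}(C') = C·f - mult_x(C) = a - m`, and `C'² = C² + a² - 2am`. -/
structure ElemTransform where
  S : RuledSurface
  S' : RuledSurface
  x : S.Point
  x' : S'.Point
  strict : S.Curve → S'.Curve
  strict_deg : ∀ C : S.Curve, (S'.num (strict C)).1 = (S.num C).1
  strict_mem : ∀ C : S.Curve, S.mem x C → C ≠ S.fibre x → S'.mem x' (strict C)
  strict_mult : ∀ C : S.Curve, S.mem x C → C ≠ S.fibre x →
    (S'.mult x' (strict C) : ℤ) = (S.num C).1 - (S.mult x C : ℤ)
  strict_sq : ∀ C : S.Curve, S.mem x C → C ≠ S.fibre x →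
    inter S'.e (S'.num (strict C)) (S'.num (strict C)) =
      inter S.e (S.num C) (S.num C)
        + (S.num C).1 ^ 2 - 2 * (S.num C).1 * (S.mult x C : ℤ)

/-- Let `C ≡ aX₀ + bf` (with `a > 0`) pass through `x` with multiplicity `m`, and let
`C'` be its strict transform under the elementary transformation at `x`. Then
`C' ≡ aY₀ + (b - m + (a/2)(1 - e + e'))f` (stated after clearing the denominator `2`)
and `mult_{x'}(C') = a - m`; consequently
`C'² - mult_{x'}(C')² = C² - mult_x(C)²`, and `C` is Seshadri exceptional based at `x`
if and only if `C'` is Seshadri exceptional based at `x'`. -/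
theorem stmt6 (T : ElemTransform) (C : T.S.Curve)
    (hmem : T.S.mem T.x C) (hfib : C ≠ T.S.fibre T.x) (ha : 0 < (T.S.num C).1) :
    ((T.S'.num (T.strict C)).1 = (T.S.num C).1 ∧
      2 * (T.S'.num (T.strict C)).2 =
        2 * ((T.S.num C).2 - (T.S.mult T.x C : ℤ))
          + (T.S.num C).1 * (1 - T.S.e + T.S'.e)) ∧
    (T.S'.mult T.x' (T.strict C) : ℤ) = (T.S.num C).1 - (T.S.mult T.x C : ℤ) ∧
    (inter T.S'.e (T.S'.num (T.strict C)) (T.S'.num (T.strict C))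
        - (T.S'.mult T.x' (T.strict C) : ℤ) ^ 2
      = inter T.S.e (T.S.num C) (T.S.num C) - (T.S.mult T.x C : ℤ) ^ 2) ∧
    (T.S.exc T.x C ↔ T.S'.exc T.x' (T.strict C)) := by
  have hdeg := T.strict_deg C
  have hmul := T.strict_mult C hmem hfib
  have hsq := T.strict_sq C hmem hfib
  have hmem' := T.strict_mem C hmem hfib
  have hdiff :
      inter T.S'.e (T.S'.num (T.strict C)) (T.S'.num (T.strict C))
          - (T.S'.mult T.x' (T.strict C) : ℤ) ^ 2
        = inter T.S.e (T.S.num C) (T.S.num C) - (T.S.mult T.x C : ℤ) ^ 2 := by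
    rw [hsq, hmul]; ring
  refine ⟨⟨hdeg, ?_⟩, hmul, hdiff, ?_⟩
  · have key : (T.S.num C).1 * (2 * (T.S'.num (T.strict C)).2)
        = (T.S.num C).1 * (2 * ((T.S.num C).2 - (T.S.mult T.x C : ℤ))
            + (T.S.num C).1 * (1 - T.S.e + T.S'.e)) := by
      simp only [inter, hdeg] at hsq
      nlinarith [hsq]
    exact mul_left_cancel₀ ha.ne' key
  · constructor
    · rintro ⟨_, h⟩
      exact ⟨hmem', by linarith⟩
    · rintro ⟨_, h⟩
      exact ⟨hmem, by linarith⟩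
end

section
/- Let S be a geometrically ruled surface with invariant e > 0, and A ≡ aX₀ + bf a nef divisor. If x ∈ X₀ then ε(A,x) = min{a, b − ae}; if x ∉ X₀ then ε(A,x) = a. -/
/-- A geometrically ruled surface together with its minimal self-intersection
section `X₀`, of numerical class `(1, 0)`. -/
structure RuledSurfaceX0 extends RuledSurface where
  X0 : Curve
  X0_num : num X0 = (1, 0)

/-- Let `S` be a geometrically ruled surface with invariant `e > 0` (so every
irreducible curve other than `X₀` and the fibres has class `aX₀ + bf` with `a > 0`
and `b > ae`), and let `A ≡ aX₀ + bf` be nef (`a ≥ 0`, `b ≥ ae`). If `x ∈ X₀`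
then `ε(A,x) = min{a, b - ae}`; if `x ∉ X₀` then `ε(A,x) = a`. -/
theorem stmt8 (S : RuledSurfaceX0) (he : 0 < S.e)
    (hclass : ∀ C : S.Curve, C = S.X0 ∨ S.num C = (0, 1) ∨
      (0 < (S.num C).1 ∧ (S.num C).1 * S.e < (S.num C).2))
    (A : ℤ × ℤ) (hA : 0 ≤ A.1 ∧ A.1 * S.e ≤ A.2) (x : S.Point) :
    (S.mem x S.X0 →
      S.toRuledSurface.seshadri A x =
        min (A.1 : ℝ) ((A.2 : ℝ) - (A.1 : ℝ) * (S.e : ℝ))) ∧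
    (¬ S.mem x S.X0 → S.toRuledSurface.seshadri A x = (A.1 : ℝ)) := by
  obtain ⟨ha, hb⟩ := hA
  -- the set
  set T : Set ℝ := {r : ℝ | ∃ C : S.Curve, S.mem x C ∧
    r = (inter S.e A (S.num C) : ℝ) / (S.mult x C : ℝ)} with hT
  have hsesh : S.toRuledSurface.seshadri A x = sInf T := rfl
  -- X0 has multiplicity 1 wherever it passes
  have hmultX0 : ∀ y, S.mem y S.X0 → S.mult y S.X0 = 1 := by
    intro y hy
    have hne : S.X0 ≠ S.fibre y := by
      intro h
      have h2 := S.X0_num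
      rw [h, S.fibre_num] at h2
      simp at h2
    have h1 := S.inter_ge_mult y S.X0 (S.fibre y) hne hy (S.fibre_mem y)
    rw [S.X0_num, S.fibre_num, S.fibre_mult] at h1
    simp [inter] at h1
    have h2 := S.mult_pos y S.X0 hy
    omega
  -- A.1 is in the set (via the fibre)
  have hain : (A.1 : ℝ) ∈ T := by
    refine ⟨S.fibre x, S.fibre_mem x, ?_⟩
    rw [S.fibre_num, S.fibre_mult]
    simp [inter]
  -- generic lower-bound transfer
  have hlow : ∀ v : ℤ, (∀ C, S.mem x C → v * (S.mult x C : ℤ) ≤ inter S.e A (S.num C)) →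
      ∀ r ∈ T, (v : ℝ) ≤ r := by
    rintro v hv r ⟨C, hC, rfl⟩
    have hm := S.mult_pos x C hC
    have hmR : (0 : ℝ) < (S.mult x C : ℝ) := by exact_mod_cast hm
    rw [le_div_iff₀ hmR]
    exact_mod_cast hv C hC
  constructor
  · -- case x ∈ X₀
    intro hx
    set vZ : ℤ := min A.1 (A.2 - A.1 * S.e) with hvZ
    have hbin : ((A.2 - A.1 * S.e : ℤ) : ℝ) ∈ T := by
      refine ⟨S.X0, hx, ?_⟩
      rw [S.X0_num, hmultX0 x hx]
      simp [inter]
      push_cast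
      ring
    have hvin : (vZ : ℝ) ∈ T := by
      rcases min_cases A.1 (A.2 - A.1 * S.e) with ⟨h1, _⟩ | ⟨h1, _⟩ <;>
        rw [hvZ, h1]
      · exact hain
      · exact hbin
    have hvlb : ∀ C, S.mem x C → vZ * (S.mult x C : ℤ) ≤ inter S.e A (S.num C) := by
      intro C hC
      have hmin1 : vZ ≤ A.1 := min_le_left _ _
      have hmin2 : vZ ≤ A.2 - A.1 * S.e := min_le_right _ _
      rcases hclass C with h | h | ⟨hc, hd⟩
      · subst h
        rw [S.X0_num, hmultX0 x hx]
        simp [inter]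
        have hcm : S.e * A.1 = A.1 * S.e := mul_comm _ _
        omega
      · have hne : C ≠ S.X0 := by
          intro hh; rw [hh, S.X0_num] at h; simp at h
        have h1 := S.inter_ge_mult x C S.X0 hne hC hx
        rw [h, S.X0_num, hmultX0 x hx] at h1
        simp [inter] at h1
        have h2 := S.mult_pos x C hC
        have h3 : S.mult x C = 1 := by omega
        rw [h, h3]
        simp [inter]
        omega
      · have hne : C ≠ S.X0 := by
          intro hh; rw [hh, S.X0_num] at hd; simp at hd; omega
        have h1 := S.inter_ge_mult x C S.X0 hne hC hx
        rw [S.X0_num, hmultX0 x hx] at h1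
        simp [inter] at h1 ⊢
        have hm := S.mult_pos x C hC
        have hmZ : (1 : ℤ) ≤ (S.mult x C : ℤ) := by exact_mod_cast hm
        have hb0 : 0 ≤ A.2 := le_trans (by nlinarith) hb
        nlinarith [mul_le_mul_of_nonneg_left h1 ha,
          mul_le_mul_of_nonneg_right hmin1 (le_trans zero_le_one hmZ),
          mul_nonneg hb0 hc.le]
    have hbdd : BddBelow T := ⟨(vZ : ℝ), fun r hr => hlow vZ hvlb r hr⟩
    have hEq : sInf T = (vZ : ℝ) :=
      le_antisymm (csInf_le hbdd hvin) (le_csInf ⟨_, hvin⟩ (hlow vZ hvlb))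
    rw [hsesh, hEq, hvZ]
    push_cast
    ring_nf
  · -- case x ∉ X₀
    intro hx
    have hvlb : ∀ C, S.mem x C → A.1 * (S.mult x C : ℤ) ≤ inter S.e A (S.num C) := by
      intro C hC
      rcases hclass C with h | h | ⟨hc, hd⟩
      · exact absurd (h ▸ hC) hx
      · by_cases hCf : C = S.fibre x
        · rw [hCf, S.fibre_num, S.fibre_mult]
          simp [inter]
        · have h1 := S.inter_ge_mult x C (S.fibre x) hCf hC (S.fibre_mem x)
          rw [h, S.fibre_num, S.fibre_mult] at h1
          simp [inter] at h1
          have h2 := S.mult_pos x C hC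
          omega
      · have hne : C ≠ S.fibre x := by
          intro hh; rw [hh, S.fibre_num] at hc; simp at hc
        have h1 := S.inter_ge_mult x C (S.fibre x) hne hC (S.fibre_mem x)
        rw [S.fibre_num, S.fibre_mult] at h1
        simp [inter] at h1
        have hm := S.mult_pos x C hC
        have hmZ : (1 : ℤ) ≤ (S.mult x C : ℤ) := by exact_mod_cast hm
        simp [inter]
        have hab : A.1 ≤ A.2 := le_trans (by nlinarith) hb
        nlinarith [mul_le_mul_of_nonneg_left h1 ha,
          mul_le_mul_of_nonneg_right hab hc.le,
          mul_nonneg ha (by have hcm : S.e * (S.num C).1 = (S.num C).1 * S.e := mul_comm _ _; omega : (0:ℤ) ≤ (S.num C).2 - S.e * (S.num C).1)]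
    have hbdd : BddBelow T := ⟨(A.1 : ℝ), fun r hr => hlow A.1 hvlb r hr⟩
    rw [hsesh]
    exact le_antisymm (csInf_le hbdd hain) (le_csInf ⟨_, hain⟩ (hlow A.1 hvlb))
end

section
/- Let S = X × P¹ be the trivial ruled surface over a smooth curve X, and A ≡ aX₀ + bf a nef divisor. Then for every point x ∈ S, ε(A,x) = min{a, b}. -/
/-- Let `S = X × P¹` be the trivial ruled surface over a smooth curve `X`: it has
invariant `e = 0` and through every point there passes a curve `X × {t}` numerically
equivalent to `X₀` (class `(1,0)`). For every nef divisor `A ≡ aX₀ + bf`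
(`a, b ≥ 0`) and every point `x`, one has `ε(A,x) = min{a, b}`. -/
theorem stmt10 (S : RuledSurface) (he : S.e = 0)
    (hsec : ∀ x : S.Point, ∃ C : S.Curve, S.mem x C ∧ S.num C = (1, 0))
    (A : ℤ × ℤ) (hA : 0 ≤ A.1 ∧ 0 ≤ A.2) (x : S.Point) :
    S.seshadri A x = min (A.1 : ℝ) (A.2 : ℝ) := by
  obtain ⟨ha, hb⟩ := hA
  obtain ⟨D, hDmem, hDnum⟩ := hsec x
  set T : Set ℝ :=
    {r : ℝ | ∃ C : S.Curve, S.mem x C ∧ r = (inter S.e A (S.num C) : ℝ) / (S.mult x C : ℝ)}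
    with hT
  have hDfib : D ≠ S.fibre x := by
    intro h
    have := S.fibre_num x
    rw [← h, hDnum] at this
    simp at this
  -- multiplicity of the section D at x is 1
  have hDmult : S.mult x D = 1 := by
    have h := S.inter_ge_mult x D (S.fibre x) hDfib hDmem (S.fibre_mem x)
    rw [hDnum, S.fibre_num x, S.fibre_mult x, he] at h
    simp [inter] at h
    have h1 := S.mult_pos x D hDmem
    omega
  -- A.1 ∈ T via the fibre
  have haT : (A.1 : ℝ) ∈ T := by
    refine ⟨S.fibre x, S.fibre_mem x, ?_⟩
    rw [S.fibre_num x, S.fibre_mult x, he]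
    simp [inter]
  -- A.2 ∈ T via the section
  have hbT : (A.2 : ℝ) ∈ T := by
    refine ⟨D, hDmem, ?_⟩
    rw [hDnum, hDmult, he]
    simp [inter]
  -- lower bound
  have hlb : ∀ r ∈ T, min (A.1 : ℝ) (A.2 : ℝ) ≤ r := by
    rintro r ⟨C, hCmem, rfl⟩
    have hm1 : 1 ≤ S.mult x C := S.mult_pos x C hCmem
    have hmpos : (0 : ℝ) < (S.mult x C : ℝ) := by exact_mod_cast hm1
    rw [le_div_iff₀ hmpos]
    have key : min A.1 A.2 * (S.mult x C : ℤ) ≤ inter S.e A (S.num C) := by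
      by_cases hCf : C = S.fibre x
      · subst hCf
        rw [S.fibre_num x, S.fibre_mult x, he]
        have : min A.1 A.2 ≤ A.1 := min_le_left _ _
        simp only [inter]
        omega
      · have hc : (S.mult x C : ℤ) ≤ (S.num C).1 := by
          have h := S.inter_ge_mult x C (S.fibre x) hCf hCmem (S.fibre_mem x)
          rw [S.fibre_num x, S.fibre_mult x, he] at h
          simp [inter] at h
          omega
        by_cases hCD : C = D
        · subst hCD
          rw [hDnum, hDmult, he]
          have : min A.1 A.2 ≤ A.2 := min_le_right _ _
          simp only [inter]
          omega
        · have hd : (S.mult x C : ℤ) ≤ (S.num C).2 := by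
            have h := S.inter_ge_mult x C D hCD hCmem hDmem
            rw [hDnum, hDmult, he] at h
            simp [inter] at h
            omega
          have hmin : min A.1 A.2 ≤ A.1 := min_le_left _ _
          have h1 : min A.1 A.2 * (S.mult x C : ℤ) ≤ A.1 * (S.num C).2 := by
            calc min A.1 A.2 * (S.mult x C : ℤ) ≤ A.1 * (S.mult x C : ℤ) := by
                  exact mul_le_mul_of_nonneg_right hmin (Int.natCast_nonneg _)
              _ ≤ A.1 * (S.num C).2 := mul_le_mul_of_nonneg_left hd ha
          have h2 : 0 ≤ A.2 * (S.num C).1 := by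
            have : (0:ℤ) ≤ (S.num C).1 := le_trans (Int.natCast_nonneg _) hc
            positivity
          rw [he]
          simp only [inter]
          omega
    have key' : ((min A.1 A.2 : ℤ) : ℝ) * (S.mult x C : ℝ) ≤ (inter S.e A (S.num C) : ℝ) := by
      exact_mod_cast key
    rwa [Int.cast_min] at key'
  have hbdd : BddBelow T := ⟨_, hlb⟩
  apply le_antisymm
  · rcases min_cases (A.1 : ℝ) (A.2 : ℝ) with ⟨h, _⟩ | ⟨h, _⟩ <;> rw [h]
    · exact csInf_le hbdd haT
    · exact csInf_le hbdd hbT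
  · exact le_csInf ⟨_, haT⟩ hlb
end

section
/- Let S = P(O_X ⊕ O_X(e)) be a decomposable ruled surface over a smooth elliptic curve X with e ∈ Pic⁰(X) a non-torsion point, and let x ∉ X₀ ∪ X₁. For each n ≥ 1, the curves Cₙ ≡ 2n(n+1)X₀ + f through x with mult_x(Cₙ) = 2n+1, together with the fibre f, are exactly the Seshadri exceptional curves at x, and for an ample A ≡ aX₀ + bf one has ε(A,x) = (2n(n+1)b + a)/(2n+1) where n = ⌊√(a/(2b))⌋. -/
/-- `⌊√(a/(2b))⌋` for a divisor class `A = (a, b)`. -/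
noncomputable def nIdx (A : ℤ × ℤ) : ℕ := ⌊Real.sqrt ((A.1 : ℝ) / (2 * (A.2 : ℝ)))⌋₊

/-- `q_{Cₙ}(A) = (2n(n+1)b + a)/(2n+1)` for `A = (a, b)`. -/
noncomputable def qC (n : ℕ) (A : ℤ × ℤ) : ℝ :=
  (2 * (n : ℝ) * ((n : ℝ) + 1) * (A.2 : ℝ) + (A.1 : ℝ)) / (2 * (n : ℝ) + 1)

lemma keyA (c d m : ℤ) (hd : 1 ≤ d) (hm : 1 ≤ m) (hmc : m ≤ c) (h : 2*c*d < m^2) :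
    ∃ n : ℕ, 1 ≤ n ∧ c + 2*(n:ℤ)*((n:ℤ)+1)*d < m*(2*(n:ℤ)+1) := by
  have h2d : 2*d < m := by nlinarith
  set n : ℤ := m / (2*d) with hn
  set r : ℤ := m % (2*d) with hr
  have hdm : 2*d*n + r = m := Int.mul_ediv_add_emod m (2*d)
  have hr0 : 0 ≤ r := Int.emod_nonneg m (by omega)
  have hrlt : r < 2*d := Int.emod_lt_of_pos m (by omega)
  have hn1 : 1 ≤ n := by
    by_contra h'
    push_neg at h'
    have hn0 : n ≤ 0 := by omega
    nlinarith [mul_nonneg (show (0:ℤ) ≤ 2*d by omega) (show (0:ℤ) ≤ -n by omega)]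
  have hm2 : m = 2*d*n + r := hdm.symm
  have hid : 2*d*(m*(2*n+1) - 2*n*(n+1)*d - c) = m^2 + r*(2*d-r) - 2*c*d := by
    rw [hm2]; ring
  have hpos : 0 < 2*d*(m*(2*n+1) - 2*n*(n+1)*d - c) := by
    rw [hid]
    nlinarith [mul_nonneg hr0 (show (0:ℤ) ≤ 2*d - r by omega)]
  have hf : 0 < m*(2*n+1) - 2*n*(n+1)*d - c := by
    by_contra h'
    push_neg at h'
    nlinarith
  refine ⟨n.toNat, by omega, ?_⟩
  rw [Int.toNat_of_nonneg (by omega)]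
  linarith

lemma floor_facts (A : ℤ × ℤ) (ha : 0 < (A.1:ℝ)) (hb : 0 < (A.2:ℝ)) :
    2*(A.2:ℝ)*(nIdx A : ℝ)^2 ≤ (A.1:ℝ) ∧ (A.1:ℝ) < 2*(A.2:ℝ)*((nIdx A : ℝ)+1)^2 := by
  set a := (A.1:ℝ); set b := (A.2:ℝ)
  set s := Real.sqrt (a / (2*b)) with hs
  have hs0 : 0 ≤ s := Real.sqrt_nonneg _
  have h1 : (nIdx A : ℝ) ≤ s := Nat.floor_le hs0
  have h2 : s < (nIdx A : ℝ) + 1 := Nat.lt_floor_add_one s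
  have hs2 : s^2 * (2*b) = a := by
    have : s^2 = a/(2*b) := Real.sq_sqrt (by positivity)
    rw [this]; field_simp
  have hn2 : ((nIdx A : ℝ))^2 ≤ s^2 := by nlinarith
  have hn2' : s^2 < ((nIdx A : ℝ)+1)^2 := by nlinarith
  constructor
  · nlinarith [mul_nonneg hb.le (sub_nonneg.mpr hn2)]
  · nlinarith [mul_pos hb (sub_pos.mpr hn2')]

lemma qC_min (A : ℤ × ℤ) (ha : 0 < (A.1:ℝ)) (hb : 0 < (A.2:ℝ)) (n : ℕ) :
    qC (nIdx A) A ≤ qC n A := by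
  obtain ⟨hlow, hhigh⟩ := floor_facts A ha hb
  set a := (A.1:ℝ); set b := (A.2:ℝ)
  set n₀ := nIdx A
  unfold qC
  rw [div_le_div_iff₀ (by positivity) (by positivity)]
  rcases lt_trichotomy n₀ n with hlt | heq | hgt
  · have hcast : (n₀:ℝ) + 1 ≤ (n:ℝ) := by exact_mod_cast hlt
    have hfac : 0 ≤ b*(2*(n:ℝ)*(n₀:ℝ)+(n:ℝ)+(n₀:ℝ)+1) - a := by
      have h1 : (0:ℝ) ≤ ((n:ℝ) - ((n₀:ℝ)+1))*(2*(n₀:ℝ)+1) :=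
        mul_nonneg (by linarith) (by positivity)
      nlinarith [mul_nonneg hb.le (show (0:ℝ) ≤ 2*(n:ℝ)*(n₀:ℝ)+(n:ℝ)+(n₀:ℝ)+1 - 2*((n₀:ℝ)+1)^2 by nlinarith)]
    nlinarith [mul_nonneg (show (0:ℝ) ≤ (n:ℝ)-(n₀:ℝ) by linarith) hfac]
  · subst heq; linarith
  · have hcast : (n:ℝ) + 1 ≤ (n₀:ℝ) := by exact_mod_cast hgt
    have hfac : 0 ≤ a - b*(2*(n:ℝ)*(n₀:ℝ)+(n:ℝ)+(n₀:ℝ)+1) := by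
      have h1 : (0:ℝ) ≤ ((n₀:ℝ) - (n:ℝ) - 1)*(2*(n₀:ℝ)+1) :=
        mul_nonneg (by linarith) (by positivity)
      nlinarith [mul_nonneg hb.le (show (0:ℝ) ≤ 2*(n₀:ℝ)^2 - (2*(n:ℝ)*(n₀:ℝ)+(n:ℝ)+(n₀:ℝ)+1) by nlinarith)]
    nlinarith [mul_nonneg (show (0:ℝ) ≤ (n₀:ℝ)-(n:ℝ) by linarith) hfac]

lemma qC_le_sqrt (A : ℤ × ℤ) (ha : 0 < (A.1:ℝ)) (hb : 0 < (A.2:ℝ)) :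
    qC (nIdx A) A ≤ Real.sqrt (2*(A.1:ℝ)*(A.2:ℝ)) := by
  set a := (A.1:ℝ); set b := (A.2:ℝ)
  set s := Real.sqrt (a / (2*b)) with hs
  set n₀ := nIdx A
  have hs0 : 0 ≤ s := Real.sqrt_nonneg _
  have h1 : (n₀:ℝ) ≤ s := Nat.floor_le hs0
  have h2 : s < (n₀:ℝ) + 1 := Nat.lt_floor_add_one s
  have hs2 : s^2 = a/(2*b) := Real.sq_sqrt (by positivity)
  have hsq : (2*b*s)^2 = 2*a*b := by
    have : (2*b*s)^2 = 4*b^2*s^2 := by ring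
    rw [this, hs2]; field_simp; ring
  have hsqrt : Real.sqrt (2*a*b) = 2*b*s := by
    rw [← hsq, Real.sqrt_sq (by positivity)]
  rw [hsqrt]
  unfold qC
  rw [div_le_iff₀ (by positivity)]
  have ha' : a = 2*b*s^2 := by rw [hs2]; field_simp
  have hss : (s - (n₀:ℝ))*(s - ((n₀:ℝ)+1)) ≤ 0 :=
    mul_nonpos_of_nonneg_of_nonpos (by linarith) (by linarith)
  nlinarith [hb]

lemma sqrt_le_ratio (a b c d m : ℝ) (ha : 0 < a) (hb : 0 < b) (hm : 1 ≤ m)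
    (hmc : m ≤ c) (hd : 1 ≤ d) (h : m^2 ≤ 2*c*d) :
    Real.sqrt (2*a*b) ≤ (a*d + b*c)/m := by
  have hm0 : 0 < m := by linarith
  have hc0 : 0 < c := by linarith
  have ht : 0 ≤ (a*d + b*c)/m := by positivity
  have h2 : 2*a*b ≤ ((a*d + b*c)/m)^2 := by
    rw [div_pow, le_div_iff₀ (by positivity)]
    nlinarith [sq_nonneg (a*d - b*c), mul_le_mul_of_nonneg_left h
      (show (0:ℝ) ≤ 2*a*b by positivity)]
  calc Real.sqrt (2*a*b) ≤ Real.sqrt (((a*d + b*c)/m)^2) := Real.sqrt_le_sqrt h2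
    _ = (a*d + b*c)/m := Real.sqrt_sq ht


/-- Let `S = P(O_X ⊕ O_X(e))` be the decomposable ruled surface over a smooth elliptic
curve `X` with `e ∈ Pic⁰(X)` non-torsion: it has invariant `e = 0`, two disjoint
sections `X₀, X₁` of class `(1,0)`, and for each `x ∉ X₀ ∪ X₁` and each `n ≥ 1`
an irreducible curve `Cₙ ≡ 2n(n+1)X₀ + f` through `x` with `mult_x(Cₙ) = 2n+1`.
Then these curves `Cₙ` together with the fibre are exactly the Seshadri exceptional
curves based at `x`, and for every ample `A ≡ aX₀ + bf` (`a, b > 0`),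
`ε(A,x) = (2n(n+1)b + a)/(2n+1)` with `n = ⌊√(a/(2b))⌋`. -/
theorem stmt16 (S : RuledSurface) (he : S.e = 0)
    (X0 X1 : S.Curve) (hX0 : S.num X0 = (1, 0)) (hX1 : S.num X1 = (1, 0))
    (hnotors : ∀ C : S.Curve, 1 < (S.num C).1 → (S.num C).2 ≠ 0)
    (x : S.Point) (hx0 : ¬ S.mem x X0) (hx1 : ¬ S.mem x X1)
    (Cn : ℕ → S.Curve)
    (hCnum : ∀ n : ℕ, 1 ≤ n → S.num (Cn n) = (2 * (n : ℤ) * ((n : ℤ) + 1), 1))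
    (hCmem : ∀ n : ℕ, 1 ≤ n → S.mem x (Cn n))
    (hCmult : ∀ n : ℕ, 1 ≤ n → S.mult x (Cn n) = 2 * n + 1) :
    (∀ D : S.Curve, S.exc x D ↔ (D = S.fibre x ∨ ∃ n : ℕ, 1 ≤ n ∧ D = Cn n)) ∧
    (∀ A : ℤ × ℤ, 0 < A.1 → 0 < A.2 →
      S.seshadri A x = qC (nIdx A) A) := by
  have hpart1 : ∀ D : S.Curve, S.exc x D ↔ (D = S.fibre x ∨ ∃ n : ℕ, 1 ≤ n ∧ D = Cn n) := by
    intro D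
    constructor
    · rintro ⟨hmem, hlt⟩
      by_contra hcon
      push_neg at hcon
      obtain ⟨hfib, hCn⟩ := hcon
      set c := (S.num D).1 with hc
      set d := (S.num D).2 with hd
      set m := (S.mult x D : ℤ) with hmdef
      have hm1 : 1 ≤ m := by
        have := S.mult_pos x D hmem
        omega
      have hcm : m ≤ c := by
        have h := S.inter_ge_mult x D (S.fibre x) hfib hmem (S.fibre_mem x)
        rw [S.fibre_num, S.fibre_mult, he] at h
        simp [inter] at h
        omega
      have hall : ∀ n : ℕ, 1 ≤ n → m * (2*(n:ℤ)+1) ≤ c + 2*(n:ℤ)*((n:ℤ)+1)*d := by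
        intro n hn
        have h := S.inter_ge_mult x D (Cn n) (hCn n hn) hmem (hCmem n hn)
        rw [hCnum n hn, hCmult n hn, he] at h
        simp only [inter] at h
        push_cast at h
        linarith
      have hd1 : 1 ≤ d := by
        have hc1 : 1 ≤ c := by omega
        have h := hall c.toNat (by omega)
        rw [Int.toNat_of_nonneg (by omega)] at h
        by_contra h'
        push_neg at h'
        have hd0 : d ≤ 0 := by omega
        nlinarith [mul_nonneg (show (0:ℤ) ≤ 2*c*(c+1) by nlinarith) (show (0:ℤ) ≤ -d by omega)]
      have hself : 2*c*d < m^2 := by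
        rw [he] at hlt
        simp only [inter] at hlt
        push_cast at hlt
        nlinarith [hlt]
      obtain ⟨n, hn1, hn2⟩ := keyA c d m hd1 hm1 hcm hself
      have := hall n hn1
      linarith
    · rintro (rfl | ⟨n, hn, rfl⟩)
      · refine ⟨S.fibre_mem x, ?_⟩
        rw [S.fibre_num, S.fibre_mult, he]
        simp [inter]
      · refine ⟨hCmem n hn, ?_⟩
        rw [hCnum n hn, hCmult n hn, he]
        simp only [inter]
        push_cast
        nlinarith [sq_nonneg ((n:ℤ))]
  refine ⟨hpart1, ?_⟩
  intro A ha hb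
  have ha' : 0 < (A.1:ℝ) := by exact_mod_cast ha
  have hb' : 0 < (A.2:ℝ) := by exact_mod_cast hb
  set n₀ := nIdx A with hn₀
  have hmemT : qC n₀ A ∈ {r : ℝ | ∃ C : S.Curve, S.mem x C ∧
      r = (inter S.e A (S.num C) : ℝ) / (S.mult x C : ℝ)} := by
    by_cases h0 : n₀ = 0
    · refine ⟨S.fibre x, S.fibre_mem x, ?_⟩
      rw [S.fibre_num, S.fibre_mult, he, h0]
      simp [inter, qC]
    · have hn : 1 ≤ n₀ := Nat.one_le_iff_ne_zero.2 h0
      refine ⟨Cn n₀, hCmem _ hn, ?_⟩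
      rw [hCnum _ hn, hCmult _ hn, he]
      simp only [inter, qC]
      push_cast
      ring
  have hlb : ∀ r ∈ {r : ℝ | ∃ C : S.Curve, S.mem x C ∧
      r = (inter S.e A (S.num C) : ℝ) / (S.mult x C : ℝ)}, qC n₀ A ≤ r := by
    rintro r ⟨C, hmemC, rfl⟩
    by_cases hexc : S.exc x C
    · rcases (hpart1 C).1 hexc with rfl | ⟨n, hn, rfl⟩
      · have h := qC_min A ha' hb' 0
        rw [S.fibre_num, S.fibre_mult, he]
        simp only [inter, qC] at h ⊢
        push_cast at h ⊢
        simpa using by linarith [h]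
      · have h := qC_min A ha' hb' n
        rw [hCnum _ hn, hCmult _ hn, he]
        have heq : (inter 0 A (2 * (n : ℤ) * ((n : ℤ) + 1), 1) : ℝ) / ((2*n+1 : ℕ) : ℝ)
            = qC n A := by
          simp only [inter, qC]
          push_cast
          ring
        rw [heq]
        exact h
    · -- not exceptional
      unfold RuledSurface.exc at hexc
      push_neg at hexc
      have hge := hexc hmemC
      set c := (S.num C).1 with hc
      set d := (S.num C).2 with hd
      set m := (S.mult x C : ℤ) with hmdef
      have hm1 : 1 ≤ m := by
        have := S.mult_pos x C hmemC
        omega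
      have hCfib : C ≠ S.fibre x := by
        rintro rfl
        exact absurd ((hpart1 (S.fibre x)).2 (Or.inl rfl)) (by
          unfold RuledSurface.exc
          push_neg
          exact hexc)
      have hcm : m ≤ c := by
        have h := S.inter_ge_mult x C (S.fibre x) hCfib hmemC (S.fibre_mem x)
        rw [S.fibre_num, S.fibre_mult, he] at h
        simp [inter] at h
        omega
      have hself : m^2 ≤ 2*c*d := by
        rw [he] at hge
        simp only [inter] at hge
        nlinarith [hge]
      have hd1 : 1 ≤ d := by nlinarith
      have hratio : (inter S.e A (S.num C) : ℝ) / (S.mult x C : ℝ)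
          = ((A.1:ℝ)*(d:ℝ) + (A.2:ℝ)*(c:ℝ)) / (m:ℝ) := by
        rw [he]
        simp only [inter, ← hc, ← hd]
        push_cast [hmdef]
        ring_nf
      rw [hratio]
      calc qC n₀ A ≤ Real.sqrt (2*(A.1:ℝ)*(A.2:ℝ)) := qC_le_sqrt A ha' hb'
        _ ≤ _ := sqrt_le_ratio _ _ _ _ _ ha' hb' (by exact_mod_cast hm1)
            (by exact_mod_cast hcm) (by exact_mod_cast hd1)
            (by push_cast; exact_mod_cast by nlinarith [hself] : ((m:ℝ))^2 ≤ 2*(c:ℝ)*(d:ℝ))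
  unfold RuledSurface.seshadri
  exact le_antisymm (csInf_le ⟨qC n₀ A, hlb⟩ hmemT) (le_csInf ⟨_, hmemT⟩ hlb)
end

section
/- Let S = P(O_X ⊕ O_X(e)) over a smooth elliptic curve X with e ∈ Pic⁰(X) a strict k-torsion point (k ≥ 2), x ∉ X₀ ∪ X₁, and A ≡ aX₀ + bf ample. If a/(2b) ≤ k²/4 (k even) or a/(2b) ≤ (k²+1)/4 (k odd), then ε(A,x) = (2n(n+1)b + a)/(2n+1) with n = ⌊√(a/(2b))⌋; if a/(2b) ≥ k²/4 (k even) or a/(2b) ≥ (k²+1)/4 (k odd), then ε(A,x) = kb. -/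

lemma coreA1 (a b n α β m : ℤ) (hn : 0 ≤ n) (hb : 0 < b) (hm : 1 ≤ m)
    (hlo : 2*n*(n+1)*b ≤ a) (hhi : a ≤ 2*(n+1)^2*b)
    (c1 : (2*n+1)*m ≤ α + 2*n*(n+1)*β) (c2 : (2*n+3)*m ≤ α + 2*(n+1)*(n+2)*β) :
    (2*n*(n+1)*b + a)*m ≤ (2*n+1)*(a*β + b*α) := by
  have hP : 0 ≤ 2*(n+1)*(n+2)*b - a := by nlinarith
  have h1 : 0 ≤ (2*(n+1)*(n+2)*b - a) * (α + 2*n*(n+1)*β - (2*n+1)*m) :=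
    mul_nonneg hP (by linarith)
  have h2 : 0 ≤ (a - 2*n*(n+1)*b) * (α + 2*(n+1)*(n+2)*β - (2*n+3)*m) :=
    mul_nonneg (by linarith) (by linarith)
  have h3 : 0 ≤ m * (2*(n+1)^2*b - a) := mul_nonneg (by linarith) (by linarith)
  have key : 4*(n+1)*((2*n+1)*(a*β + b*α) - (2*n*(n+1)*b + a)*m)
      = (2*n+1)*((2*(n+1)*(n+2)*b - a) * (α + 2*n*(n+1)*β - (2*n+1)*m)
        + (a - 2*n*(n+1)*b) * (α + 2*(n+1)*(n+2)*β - (2*n+3)*m))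
        + 2*(m * (2*(n+1)^2*b - a)) := by ring
  nlinarith [mul_nonneg (by linarith : (0:ℤ) ≤ 2*n+1) h1, mul_nonneg (by linarith : (0:ℤ) ≤ 2*n+1) h2]

lemma coreA2 (a b n α β m : ℤ) (hn : 1 ≤ n) (hb : 0 < b) (hm : 1 ≤ m)
    (hlo : 2*n^2*b ≤ a) (hhi : a ≤ 2*n*(n+1)*b)
    (c1 : (2*n-1)*m ≤ α + 2*(n-1)*n*β) (c2 : (2*n+1)*m ≤ α + 2*n*(n+1)*β) :
    (2*n*(n+1)*b + a)*m ≤ (2*n+1)*(a*β + b*α) := by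
  have h1 : 0 ≤ (2*n*(n+1)*b - a) * (α + 2*(n-1)*n*β - (2*n-1)*m) :=
    mul_nonneg (by linarith) (by linarith)
  have h2 : 0 ≤ (a - 2*(n-1)*n*b) * (α + 2*n*(n+1)*β - (2*n+1)*m) :=
    mul_nonneg (by nlinarith) (by linarith)
  have h3 : 0 ≤ m * (a - 2*n^2*b) := mul_nonneg (by linarith) (by linarith)
  have key : 4*n*((2*n+1)*(a*β + b*α) - (2*n*(n+1)*b + a)*m)
      = (2*n+1)*((2*n*(n+1)*b - a) * (α + 2*(n-1)*n*β - (2*n-1)*m)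
        + (a - 2*(n-1)*n*b) * (α + 2*n*(n+1)*β - (2*n+1)*m))
        + 2*(m * (a - 2*n^2*b)) := by ring
  nlinarith [mul_nonneg (by linarith : (0:ℤ) ≤ 2*n+1) h1, mul_nonneg (by linarith : (0:ℤ) ≤ 2*n+1) h2]

lemma core2 (a b k n0 α β m : ℤ) (hn : 0 ≤ n0) (hb : 0 < b) (hm : 1 ≤ m)
    (hkM : 2*n0+1 ≤ k)
    (hT : (k^2 - k*(2*n0+1) + 2*n0*(n0+1))*b ≤ a)
    (c1 : (2*n0+1)*m ≤ α + 2*n0*(n0+1)*β) (cB : m ≤ k*β) :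
    k*b*m ≤ a*β + b*α := by
  have hk : 0 < k := by linarith
  have hN : 2*n0*(n0+1)*b ≤ a := by
    nlinarith [mul_nonneg (mul_nonneg (by linarith : (0:ℤ) ≤ k - (2*n0+1)) hk.le) hb.le]
  have h1 : 0 ≤ k*b * (α + 2*n0*(n0+1)*β - (2*n0+1)*m) :=
    mul_nonneg (by positivity) (by linarith)
  have h2 : 0 ≤ (a - 2*n0*(n0+1)*b) * (k*β - m) := mul_nonneg (by linarith) (by linarith)
  have h3 : 0 ≤ m * (a - (k^2 - k*(2*n0+1) + 2*n0*(n0+1))*b) := mul_nonneg (by linarith) (by linarith)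
  have key : k*(a*β + b*α - k*b*m)
      = k*b * (α + 2*n0*(n0+1)*β - (2*n0+1)*m) + (a - 2*n0*(n0+1)*b) * (k*β - m)
        + m * (a - (k^2 - k*(2*n0+1) + 2*n0*(n0+1))*b) := by ring
  nlinarith []

lemma coreBodd (a b n0 α β m : ℤ) (hn : 0 ≤ n0) (hb : 0 < b) (hm : 1 ≤ m)
    (hlo : 2*n0*(n0+1)*b ≤ a)
    (c1 : (2*n0+1)*m ≤ α + 2*n0*(n0+1)*β) (cB : m ≤ (2*n0+1)*β) :
    (2*n0*(n0+1)*b + a)*m ≤ (2*n0+1)*(a*β + b*α) := by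
  have h1 : 0 ≤ (2*n0+1)*b * (α + 2*n0*(n0+1)*β - (2*n0+1)*m) :=
    mul_nonneg (by positivity) (by linarith)
  have h2 : 0 ≤ (a - 2*n0*(n0+1)*b) * ((2*n0+1)*β - m) := mul_nonneg (by linarith) (by linarith)
  have key : (2*n0+1)*(a*β + b*α) - (2*n0*(n0+1)*b + a)*m
      = (2*n0+1)*b * (α + 2*n0*(n0+1)*β - (2*n0+1)*m)
        + (a - 2*n0*(n0+1)*b) * ((2*n0+1)*β - m) + m*b := by ring
  nlinarith [mul_pos (by linarith : (0:ℤ) < m) hb]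

lemma coreBeven (a b n0 α β m : ℤ) (hn : 0 ≤ n0) (hb : 0 < b) (hm : 1 ≤ m)
    (hlo : 2*n0*(n0+1)*b ≤ a) (hhi : a ≤ 2*(n0+1)^2*b)
    (c1 : (2*n0+1)*m ≤ α + 2*n0*(n0+1)*β) (cB : m ≤ (2*n0+2)*β) :
    (2*n0*(n0+1)*b + a)*m ≤ (2*n0+1)*(a*β + b*α) := by
  have h1 : 0 ≤ (2*n0+1)*(2*n0+2)*b * (α + 2*n0*(n0+1)*β - (2*n0+1)*m) :=
    mul_nonneg (by positivity) (by linarith)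
  have h2 : 0 ≤ (2*n0+1)*(a - 2*n0*(n0+1)*b) * ((2*n0+2)*β - m) :=
    mul_nonneg (mul_nonneg (by linarith) (by linarith)) (by linarith)
  have h3 : 0 ≤ m * (2*(n0+1)^2*b - a) := mul_nonneg (by linarith) (by linarith)
  have key : (2*n0+2)*((2*n0+1)*(a*β + b*α) - (2*n0*(n0+1)*b + a)*m)
      = (2*n0+1)*(2*n0+2)*b * (α + 2*n0*(n0+1)*β - (2*n0+1)*m)
        + (2*n0+1)*(a - 2*n0*(n0+1)*b) * ((2*n0+2)*β - m)
        + m * (2*(n0+1)^2*b - a) := by ring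
  nlinarith []

/-- generic lower bound, case 1 -/
lemma genLB1 (a b kZ n n0 α β m : ℤ)
    (ha : 0 < a) (hb : 0 < b) (hm : 1 ≤ m) (hn : 0 ≤ n) (hn0 : 0 ≤ n0)
    (hks : kZ = 2*n0+1 ∨ kZ = 2*n0+2)
    (hTodd : kZ = 2*n0+1 → a ≤ (2*n0^2+2*n0+1)*b)
    (hTeven : kZ = 2*n0+2 → a ≤ 2*(n0+1)^2*b)
    (hfl : 2*n^2*b ≤ a) (hfu : a < 2*(n+1)^2*b)
    (hAll : ∀ j : ℤ, 0 ≤ j → j ≤ n0 → (2*j+1)*m ≤ α + 2*j*(j+1)*β)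
    (cB : m ≤ kZ*β) :
    (2*n*(n+1)*b + a)*m ≤ (2*n+1)*(a*β + b*α) := by
  have hTe : a ≤ 2*(n0+1)^2*b := by
    rcases hks with h | h
    · have := hTodd h; nlinarith
    · exact hTeven h
  have hn_le : n ≤ n0+1 := by
    by_contra hcon
    push_neg at hcon
    have e1 : 2*(n0+2)^2*b ≤ 2*n^2*b := by
      nlinarith [mul_nonneg (mul_nonneg (show (0:ℤ) ≤ n-n0-2 by linarith) (show (0:ℤ) ≤ n+n0+2 by linarith)) hb.le]
    nlinarith [e1, mul_pos (show (0:ℤ) < 2*n0+3 by linarith) hb]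
  rcases le_or_gt (2*n*(n+1)*b) a with hmid | hmid
  · have hnn0 : n ≤ n0 := by
      by_contra hcon
      push_neg at hcon
      have e1 : 2*(n0+1)*(n0+2)*b ≤ 2*n*(n+1)*b := by
        nlinarith [mul_nonneg (mul_nonneg (show (0:ℤ) ≤ n-n0-1 by linarith) (show (0:ℤ) ≤ n+n0+2 by linarith)) hb.le]
      nlinarith [e1, mul_pos (show (0:ℤ) < 2*n0+2 by linarith) hb]
    rcases le_or_gt (n+1) n0 with h' | h'
    · exact coreA1 a b n α β m hn hb hm hmid hfu.le
        (hAll n hn hnn0) (by have := hAll (n+1) (by linarith) h'; linarith [this] )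
    · have hnn : n = n0 := le_antisymm hnn0 (by linarith)
      subst hnn
      rcases hks with h | h
      · exact coreBodd a b n α β m hn hb hm hmid (hAll n hn le_rfl) (by rw [h] at cB; exact cB)
      · exact coreBeven a b n α β m hn hb hm hmid (hTeven h) (hAll n hn le_rfl) (by rw [h] at cB; exact cB)
  · have hn1 : 1 ≤ n := by
      by_contra hcon
      have : n = 0 := by omega
      rw [this] at hmid; simp at hmid; linarith
    rcases le_or_gt n n0 with h' | h'
    · refine coreA2 a b n α β m hn1 hb hm hfl hmid.le ?_ (hAll n hn h')
      have := hAll (n-1) (by linarith) (by linarith)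
      have e1 : 2*(n-1)*((n-1)+1) = 2*(n-1)*n := by ring
      nlinarith [this]
    · have hn' : n = n0+1 := le_antisymm hn_le h'
      rcases hks with h | h
      · exfalso
        have := hTodd h
        rw [hn'] at hfl
        nlinarith
      · have heq : a = 2*(n0+1)^2*b := le_antisymm (hTeven h) (by rw [hn'] at hfl; linarith)
        have h2 : kZ*b*m ≤ a*β + b*α := by
          refine core2 a b kZ n0 α β m hn0 hb hm (by rw [h]; linarith) ?_
            (hAll n0 hn0 le_rfl) cB
          rw [h, heq]; ring_nf; nlinarith []
        have h3 : (2*n*(n+1)*b + a)*m = (2*n+1)*(kZ*b*m) := by rw [hn', heq, h]; ring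
        rw [h3]
        exact mul_le_mul_of_nonneg_left h2 (by linarith)

/-- generic lower bound, case 2 -/
lemma genLB2 (a b kZ n0 α β m : ℤ)
    (hb : 0 < b) (hm : 1 ≤ m) (hn0 : 0 ≤ n0)
    (hks : kZ = 2*n0+1 ∨ kZ = 2*n0+2)
    (hTodd : kZ = 2*n0+1 → (kZ^2+1)*b ≤ 2*a)
    (hTeven : kZ = 2*n0+2 → kZ^2*b ≤ 2*a)
    (hAll : ∀ j : ℤ, 0 ≤ j → j ≤ n0 → (2*j+1)*m ≤ α + 2*j*(j+1)*β)
    (cB : m ≤ kZ*β) :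
    kZ*b*m ≤ a*β + b*α := by
  refine core2 a b kZ n0 α β m hn0 hb hm (by rcases hks with h | h <;> rw [h] <;> linarith) ?_
    (hAll n0 hn0 le_rfl) cB
  rcases hks with h | h
  · have := hTodd h; rw [h] at this ⊢; nlinarith
  · have := hTeven h; rw [h] at this ⊢; nlinarith

/-- valley -/
lemma valleyZ (a b n j : ℤ) (hn : 0 ≤ n) (hj : 0 ≤ j) (hb : 0 < b)
    (h1 : 2*n^2*b ≤ a) (h2 : a < 2*(n+1)^2*b) :
    (2*n*(n+1)*b + a) * (2*j+1) ≤ (2*j*(j+1)*b + a) * (2*n+1) := by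
  rcases le_or_gt j n with h | h
  · rcases eq_or_lt_of_le h with rfl | h'
    · ring_nf; exact le_rfl
    · have hj1 : j + 1 ≤ n := h'
      have key : b*(2*n*j+n+j+1) ≤ a := by nlinarith [mul_nonneg hb.le (sub_nonneg.2 hj1)]
      nlinarith [mul_nonneg (sub_nonneg.2 hj1) (sub_nonneg.2 key)]
  · have hj1 : n + 1 ≤ j := h
    have key : a ≤ b*(2*n*j+n+j+1) := by nlinarith [mul_nonneg hb.le (sub_nonneg.2 hj1)]
    nlinarith [mul_nonneg (sub_nonneg.2 hj1) (sub_nonneg.2 key)]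

/-- q_n ≤ k b  (case 1) -/
lemma q_le_kbZ (a b kZ n n0 : ℤ) (hb : 0 < b) (hn : 0 ≤ n) (hn0 : 0 ≤ n0)
    (hks : kZ = 2*n0+1 ∨ kZ = 2*n0+2)
    (hTodd : kZ = 2*n0+1 → a ≤ (2*n0^2+2*n0+1)*b)
    (hTeven : kZ = 2*n0+2 → a ≤ 2*(n0+1)^2*b)
    (hfl : 2*n^2*b ≤ a) (hfu : a < 2*(n+1)^2*b) :
    (2*n*(n+1)*b + a) * 1 ≤ kZ*b*(2*n+1) := by
  rcases le_or_gt (2*(n+1)) kZ with h | h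
  · nlinarith [mul_nonneg hb.le (by linarith : (0:ℤ) ≤ kZ - 2*(n+1))]
  · rcases hks with hpar | hpar
    · have hT := hTodd hpar
      have hnn0 : n ≤ n0 := by
        by_contra hcon
        push_neg at hcon
        have e1 : 2*(n0+1)^2*b ≤ 2*n^2*b := by
          nlinarith [mul_nonneg (mul_nonneg (show (0:ℤ) ≤ n-n0-1 by linarith) (show (0:ℤ) ≤ n+n0+1 by linarith)) hb.le]
        nlinarith [e1, mul_pos (show (0:ℤ) < 2*n0+1 by linarith) hb]
      have : n = n0 := by omega
      subst this
      rw [hpar]; nlinarith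
    · have hT := hTeven hpar
      have hup : n ≤ n0+1 := by
        by_contra hcon
        push_neg at hcon
        have e1 : 2*(n0+2)^2*b ≤ 2*n^2*b := by
          nlinarith [mul_nonneg (mul_nonneg (show (0:ℤ) ≤ n-n0-2 by linarith) (show (0:ℤ) ≤ n+n0+2 by linarith)) hb.le]
        nlinarith [e1, mul_pos (show (0:ℤ) < 2*n0+3 by linarith) hb]
      have : n = n0+1 := by omega
      subst this
      rw [hpar]; nlinarith

/-- k b ≤ q_j  (case 2) -/
lemma kb_le_qZ (a b kZ n0 j : ℤ) (hb : 0 < b) (hj : 0 ≤ j) (hn0 : 0 ≤ n0)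
    (hks : kZ = 2*n0+1 ∨ kZ = 2*n0+2)
    (hTodd : kZ = 2*n0+1 → (kZ^2+1)*b ≤ 2*a)
    (hTeven : kZ = 2*n0+2 → kZ^2*b ≤ 2*a) :
    kZ*b*(2*j+1) ≤ (2*j*(j+1)*b + a) * 1 := by
  rcases hks with hpar | hpar
  · have hT := hTodd hpar
    nlinarith [sq_nonneg (kZ - 2*j - 1), mul_nonneg (sq_nonneg (kZ - 2*j - 1)) hb.le]
  · have hT := hTeven hpar
    subst hpar
    have hd : 0 ≤ (n0 - j) * (n0 - j + 1) := by
      rcases le_or_gt j n0 with h | h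
      · exact mul_nonneg (by linarith) (by linarith)
      · have h2 : 0 ≤ (j - n0) * (j - n0 - 1) := mul_nonneg (by linarith) (by linarith)
        nlinarith [h2]
    nlinarith [mul_nonneg hd hb.le]

/-- k b ≤ a (case 2) -/
lemma kb_le_aZ (a b kZ n0 : ℤ) (hb : 0 < b) (hn0 : 0 ≤ n0)
    (hks : kZ = 2*n0+1 ∨ kZ = 2*n0+2)
    (hTodd : kZ = 2*n0+1 → (kZ^2+1)*b ≤ 2*a)
    (hTeven : kZ = 2*n0+2 → kZ^2*b ≤ 2*a) :
    kZ*b*1 ≤ a*1 := by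
  rcases hks with hpar | hpar
  · have hT := hTodd hpar
    nlinarith [mul_nonneg (sq_nonneg (kZ-1)) hb.le]
  · have hT := hTeven hpar
    nlinarith [mul_nonneg (sq_nonneg (kZ-1)) hb.le, mul_nonneg (mul_nonneg (by linarith : (0:ℤ) ≤ kZ) (by linarith : (0:ℤ) ≤ kZ - 2)) hb.le]
lemma qC_cast (n : ℕ) (A : ℤ × ℤ) :
    qC n A = ((2*(n:ℤ)*((n:ℤ)+1)*A.2 + A.1 : ℤ) : ℝ) / ((2*(n:ℤ)+1 : ℤ) : ℝ) := by
  rw [qC]; push_cast; ring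

lemma nIdx_facts (A : ℤ × ℤ) (ha : 0 < A.1) (hb : 0 < A.2) :
    2*(nIdx A : ℤ)^2*A.2 ≤ A.1 ∧ A.1 < 2*((nIdx A : ℤ)+1)^2*A.2 := by
  have hbR : (0:ℝ) < 2*(A.2:ℝ) := by positivity
  have ht0 : (0:ℝ) ≤ (A.1:ℝ)/(2*(A.2:ℝ)) := by positivity
  constructor
  · have h1 : ((nIdx A : ℕ):ℝ) ≤ Real.sqrt ((A.1:ℝ)/(2*(A.2:ℝ))) := Nat.floor_le (Real.sqrt_nonneg _)
    have h2 : ((nIdx A : ℕ):ℝ)^2 ≤ (A.1:ℝ)/(2*(A.2:ℝ)) := by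
      nlinarith [Real.sq_sqrt ht0, Real.sqrt_nonneg ((A.1:ℝ)/(2*(A.2:ℝ))), (Nat.cast_nonneg (nIdx A) : (0:ℝ) ≤ nIdx A)]
    rw [le_div_iff₀ hbR] at h2
    have : (2*(nIdx A:ℤ)^2*A.2 : ℝ) ≤ (A.1:ℝ) := by push_cast; nlinarith [h2]
    exact_mod_cast this
  · have h1 : Real.sqrt ((A.1:ℝ)/(2*(A.2:ℝ))) < (nIdx A : ℕ) + 1 := Nat.lt_floor_add_one _
    have h2 : (A.1:ℝ)/(2*(A.2:ℝ)) < ((nIdx A : ℕ) + 1:ℝ)^2 := by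
      nlinarith [Real.sq_sqrt ht0, Real.sqrt_nonneg ((A.1:ℝ)/(2*(A.2:ℝ))), (Nat.cast_nonneg (nIdx A) : (0:ℝ) ≤ nIdx A)]
    rw [div_lt_iff₀ hbR] at h2
    have : (A.1:ℝ) < (2*((nIdx A:ℤ)+1)^2*A.2 : ℝ) := by push_cast; nlinarith [h2]
    exact_mod_cast this

set_option maxHeartbeats 1000000 in
/-- Let `S = P(O_X ⊕ O_X(e))` over a smooth elliptic curve `X` with `e ∈ Pic⁰(X)` a
strict `k`-torsion point (`k ≥ 2`): invariant `e = 0`, two disjoint sections `X₀, X₁`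
of class `(1,0)`, a smooth irreducible curve `B_k ≡ kX₀` through each `x ∉ X₀ ∪ X₁`,
and irreducible curves `Cₙ ≡ 2n(n+1)X₀ + f` through `x` with `mult_x(Cₙ) = 2n+1` for
`1 ≤ n < k/2`. For `A ≡ aX₀ + bf` ample (`a, b > 0`):
if `a/(2b) ≤ k²/4` (`k` even) or `a/(2b) ≤ (k²+1)/4` (`k` odd), then
`ε(A,x) = (2n(n+1)b + a)/(2n+1)` with `n = ⌊√(a/(2b))⌋`;
if `a/(2b) ≥ k²/4` (`k` even) or `a/(2b) ≥ (k²+1)/4` (`k` odd), then `ε(A,x) = kb`. -/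
theorem stmt18 (S : RuledSurface) (he : S.e = 0) (k : ℕ) (hk : 2 ≤ k)
    (X0 X1 : S.Curve) (hX0 : S.num X0 = (1, 0)) (hX1 : S.num X1 = (1, 0))
    (x : S.Point) (hx0 : ¬ S.mem x X0) (hx1 : ¬ S.mem x X1)
    (Bk : S.Curve) (hBnum : S.num Bk = ((k : ℤ), 0))
    (hBmem : S.mem x Bk) (hBmult : S.mult x Bk = 1)
    (Cn : ℕ → S.Curve)
    (hCnum : ∀ n : ℕ, 1 ≤ n → 2 * n < k →
      S.num (Cn n) = (2 * (n : ℤ) * ((n : ℤ) + 1), 1))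
    (hCmem : ∀ n : ℕ, 1 ≤ n → 2 * n < k → S.mem x (Cn n))
    (hCmult : ∀ n : ℕ, 1 ≤ n → 2 * n < k → S.mult x (Cn n) = 2 * n + 1)
    (A : ℤ × ℤ) (hA : 0 < A.1 ∧ 0 < A.2) :
    ((A.1 : ℝ) / (2 * (A.2 : ℝ)) ≤
        (if Even k then (k : ℝ) ^ 2 / 4 else ((k : ℝ) ^ 2 + 1) / 4) →
      S.seshadri A x = qC (nIdx A) A) ∧
    ((if Even k then (k : ℝ) ^ 2 / 4 else ((k : ℝ) ^ 2 + 1) / 4) ≤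
        (A.1 : ℝ) / (2 * (A.2 : ℝ)) →
      S.seshadri A x = (k : ℝ) * (A.2 : ℝ)) := by
  obtain ⟨ha, hb⟩ := hA
  obtain ⟨n0, hks⟩ : ∃ n0 : ℕ, k = 2*n0+1 ∨ k = 2*n0+2 := by
    rcases Nat.even_or_odd k with h | h
    · exact ⟨k/2 - 1, Or.inr (by rcases h with ⟨c, hc⟩; omega)⟩
    · exact ⟨k/2, Or.inl (by rcases h with ⟨c, hc⟩; omega)⟩
  have hksZ : (k:ℤ) = 2*(n0:ℤ)+1 ∨ (k:ℤ) = 2*(n0:ℤ)+2 := by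
    rcases hks with h | h
    · left; exact_mod_cast h
    · right; exact_mod_cast h
  have hparity_odd : (k:ℤ) = 2*(n0:ℤ)+1 → ¬ Even k := by
    intro h hEv
    have hk' : k = 2*n0+1 := by exact_mod_cast h
    rw [Nat.even_iff] at hEv; omega
  have hparity_even : (k:ℤ) = 2*(n0:ℤ)+2 → Even k := by
    intro h
    have hk' : k = 2*n0+2 := by exact_mod_cast h
    exact ⟨n0+1, by omega⟩
  have hbR : (0:ℝ) < 2*(A.2:ℝ) := by positivity
  obtain ⟨hfl, hfu⟩ := nIdx_facts A ha hb
  have hnnn : (0:ℤ) ≤ (nIdx A:ℤ) := Int.natCast_nonneg _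
  have hn0n : (0:ℤ) ≤ (n0:ℤ) := Int.natCast_nonneg _
  have hmpos : ∀ C, S.mem x C → (0:ℝ) < (S.mult x C : ℝ) := by
    intro C hC
    have h1 : 0 < S.mult x C := S.mult_pos x C hC
    exact_mod_cast h1
  set E := {r : ℝ | ∃ C : S.Curve, S.mem x C ∧ r = (inter S.e A (S.num C) : ℝ) / (S.mult x C : ℝ)} with hE
  have hsesh : S.seshadri A x = sInf E := rfl
  have hIval : ∀ C : S.Curve, inter S.e A (S.num C) = A.1*(S.num C).2 + A.2*(S.num C).1 := by
    intro C; simp [inter, he]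
  have memF : ((A.1:ℤ):ℝ) ∈ E :=
    ⟨S.fibre x, S.fibre_mem x, by rw [hIval, S.fibre_num, S.fibre_mult]; norm_num⟩
  have memB : ((k:ℝ)*(A.2:ℝ)) ∈ E :=
    ⟨Bk, hBmem, by rw [hIval, hBnum, hBmult]; push_cast; ring⟩
  have memC : ∀ j:ℕ, 1 ≤ j → 2*j < k → qC j A ∈ E := by
    intro j h1 h2
    refine ⟨Cn j, hCmem j h1 h2, ?_⟩
    rw [hIval, hCnum j h1 h2, hCmult j h1 h2, qC]
    push_cast; ring
  -- transfer lemma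
  have transfer : ∀ (p q : ℤ) (C : S.Curve), 0 < q → S.mem x C →
      p*(S.mult x C : ℤ) ≤ (A.1*(S.num C).2 + A.2*(S.num C).1)*q →
      (p:ℝ)/((q:ℤ):ℝ) ≤ ((A.1*(S.num C).2 + A.2*(S.num C).1 : ℤ):ℝ)/((S.mult x C : ℕ):ℝ) := by
    intro p q C hq hC hineq
    rw [div_le_div_iff₀ (by exact_mod_cast hq) (hmpos C hC)]
    exact_mod_cast hineq
  -- constraints for a generic curve
  have hcons : ∀ C, S.mem x C → C ≠ S.fibre x → C ≠ Bk →
      (∀ j:ℕ, 1 ≤ j → 2*j < k → C ≠ Cn j) →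
      ((∀ j : ℤ, 0 ≤ j → j ≤ (n0:ℤ) →
          (2*j+1)*(S.mult x C : ℤ) ≤ (S.num C).1 + 2*j*(j+1)*(S.num C).2)
       ∧ (S.mult x C : ℤ) ≤ (k:ℤ)*(S.num C).2) := by
    intro C hC hF hB' hCj
    constructor
    · intro j hj0 hjn0
      lift j to ℕ using hj0 with jn
      rcases Nat.eq_zero_or_pos jn with rfl | hj1
      · have h := S.inter_ge_mult x C (S.fibre x) hF hC (S.fibre_mem x)
        rw [S.fibre_num, S.fibre_mult] at h
        simp only [inter, he, zero_mul, mul_zero, sub_zero] at h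
        push_cast at h ⊢
        nlinarith [h]
      · have h2j : 2*jn < k := by
          have hj' : jn ≤ n0 := by exact_mod_cast hjn0
          omega
        have h := S.inter_ge_mult x C (Cn jn) (hCj jn hj1 h2j) hC (hCmem jn hj1 h2j)
        rw [hCnum jn hj1 h2j, hCmult jn hj1 h2j] at h
        simp only [inter, he, zero_mul, mul_zero, sub_zero] at h
        push_cast at h ⊢
        nlinarith [h]
    · have h := S.inter_ge_mult x C Bk hB' hC hBmem
      rw [hBnum, hBmult] at h
      simp only [inter, he, zero_mul, mul_zero, sub_zero] at h
      push_cast at h ⊢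
      nlinarith [h]
  have hm1 : ∀ C, S.mem x C → 1 ≤ (S.mult x C : ℤ) := by
    intro C hC; exact_mod_cast S.mult_pos x C hC
  constructor
  · -- CASE 1
    intro hcase
    have hTodd : (k:ℤ) = 2*(n0:ℤ)+1 → A.1 ≤ (2*(n0:ℤ)^2+2*(n0:ℤ)+1)*A.2 := by
      intro hkz
      rw [if_neg (hparity_odd hkz)] at hcase
      rw [div_le_div_iff₀ hbR (by norm_num)] at hcase
      have hZ : A.1*4 ≤ ((k:ℤ)^2+1)*(2*A.2) := by exact_mod_cast hcase
      rw [hkz] at hZ; nlinarith [hZ]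
    have hTeven : (k:ℤ) = 2*(n0:ℤ)+2 → A.1 ≤ 2*((n0:ℤ)+1)^2*A.2 := by
      intro hkz
      rw [if_pos (hparity_even hkz)] at hcase
      rw [div_le_div_iff₀ hbR (by norm_num)] at hcase
      have hZ : A.1*4 ≤ (k:ℤ)^2*(2*A.2) := by exact_mod_cast hcase
      rw [hkz] at hZ; nlinarith [hZ]
    have hlow : ∀ r ∈ E, qC (nIdx A) A ≤ r := by
      rintro r ⟨C, hC, rfl⟩
      rw [hIval, qC_cast]
      have hqpos : (0:ℤ) < 2*(nIdx A:ℤ)+1 := by linarith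
      by_cases hF : C = S.fibre x
      · subst hF
        refine transfer (2*(nIdx A:ℤ)*((nIdx A:ℤ)+1)*A.2 + A.1) (2*(nIdx A:ℤ)+1)
          (S.fibre x) hqpos (S.fibre_mem x) ?_
        rw [S.fibre_num, S.fibre_mult]
        have hz := valleyZ A.1 A.2 (nIdx A) 0 hnnn le_rfl hb hfl hfu
        push_cast
        nlinarith [hz]
      · by_cases hB' : C = Bk
        · subst hB'
          refine transfer (2*(nIdx A:ℤ)*((nIdx A:ℤ)+1)*A.2 + A.1) (2*(nIdx A:ℤ)+1)
            _ hqpos hBmem ?_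
          rw [hBnum, hBmult]
          have hz := q_le_kbZ A.1 A.2 (k:ℤ) (nIdx A) (n0:ℤ) hb hnnn hn0n
            hksZ hTodd hTeven hfl hfu
          push_cast
          nlinarith [hz]
        · by_cases hCj : ∃ j:ℕ, 1 ≤ j ∧ 2*j < k ∧ C = Cn j
          · obtain ⟨j, hj1, hj2, rfl⟩ := hCj
            refine transfer (2*(nIdx A:ℤ)*((nIdx A:ℤ)+1)*A.2 + A.1) (2*(nIdx A:ℤ)+1)
              (Cn j) hqpos (hCmem j hj1 hj2) ?_
            rw [hCnum j hj1 hj2, hCmult j hj1 hj2]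
            have hz := valleyZ A.1 A.2 (nIdx A) (j:ℤ) hnnn (Int.natCast_nonneg _) hb hfl hfu
            push_cast
            nlinarith [hz]
          · push_neg at hCj
            obtain ⟨hAllv, hcB⟩ := hcons C hC hF hB' hCj
            refine transfer (2*(nIdx A:ℤ)*((nIdx A:ℤ)+1)*A.2 + A.1) (2*(nIdx A:ℤ)+1)
              C hqpos hC ?_
            have hz := genLB1 A.1 A.2 (k:ℤ) (nIdx A : ℤ) (n0:ℤ) (S.num C).1 (S.num C).2
              (S.mult x C : ℤ) ha hb (hm1 C hC) hnnn hn0n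
              hksZ hTodd hTeven hfl hfu hAllv hcB
            nlinarith [hz]
    have hmem : qC (nIdx A) A ∈ E := by
      rcases Nat.eq_zero_or_pos (nIdx A) with h0 | h1
      · have hq : qC (nIdx A) A = ((A.1:ℤ):ℝ) := by
          rw [h0, qC]; push_cast; norm_num
        rw [hq]; exact memF
      · by_cases h2 : 2*(nIdx A) < k
        · exact memC (nIdx A) h1 h2
        · have hge : (n0:ℤ)+1 ≤ (nIdx A : ℤ) := by
            rcases hks with h | h <;> · push_cast; omega
          have hkz : (k:ℤ) = 2*(n0:ℤ)+2 := by
            rcases hksZ with h | h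
            · exfalso
              have hT := hTodd h
              nlinarith [hfl, mul_nonneg (mul_nonneg (show (0:ℤ) ≤ (nIdx A:ℤ)-(n0:ℤ)-1 by linarith)
                (show (0:ℤ) ≤ (nIdx A:ℤ)+(n0:ℤ)+1 by linarith)) hb.le,
                mul_pos (show (0:ℤ) < 2*(n0:ℤ)+1 by linarith) hb]
            · exact h
          have hT := hTeven hkz
          have hle : (nIdx A : ℤ) ≤ (n0:ℤ)+1 := by
            by_contra hcon
            push_neg at hcon
            nlinarith [hfl, mul_nonneg (mul_nonneg (show (0:ℤ) ≤ (nIdx A:ℤ)-(n0:ℤ)-2 by linarith)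
              (show (0:ℤ) ≤ (nIdx A:ℤ)+(n0:ℤ)+2 by linarith)) hb.le,
              mul_pos (show (0:ℤ) < 2*(n0:ℤ)+3 by linarith) hb]
          have hnn' : (nIdx A : ℤ) = (n0:ℤ)+1 := le_antisymm hle hge
          have haeq : A.1 = 2*((n0:ℤ)+1)^2*A.2 := by
            refine le_antisymm hT ?_
            rw [hnn'] at hfl; exact hfl
          have hz : (2*(nIdx A:ℤ)*((nIdx A:ℤ)+1)*A.2 + A.1) = (2*(nIdx A:ℤ)+1)*((k:ℤ)*A.2) := by
            rw [hnn', hkz, haeq]; ring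
          have hqeq : qC (nIdx A) A = (k:ℝ)*(A.2:ℝ) := by
            rw [qC_cast, hz]
            have hden : ((2*(nIdx A:ℤ)+1 : ℤ):ℝ) ≠ 0 := by
              exact_mod_cast (show (0:ℤ) < 2*(nIdx A:ℤ)+1 by linarith).ne'
            push_cast at hden ⊢
            field_simp
          rw [hqeq]; exact memB
    rw [hsesh]
    exact le_antisymm (csInf_le ⟨qC (nIdx A) A, fun r hr => hlow r hr⟩ hmem)
      (le_csInf ⟨_, memF⟩ hlow)
  · -- CASE 2
    intro hcase
    have hTodd : (k:ℤ) = 2*(n0:ℤ)+1 → ((k:ℤ)^2+1)*A.2 ≤ 2*A.1 := by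
      intro hkz
      rw [if_neg (hparity_odd hkz)] at hcase
      rw [div_le_div_iff₀ (by norm_num) hbR] at hcase
      have hZ : ((k:ℤ)^2+1)*(2*A.2) ≤ A.1*4 := by exact_mod_cast hcase
      nlinarith [hZ]
    have hTeven : (k:ℤ) = 2*(n0:ℤ)+2 → (k:ℤ)^2*A.2 ≤ 2*A.1 := by
      intro hkz
      rw [if_pos (hparity_even hkz)] at hcase
      rw [div_le_div_iff₀ (by norm_num) hbR] at hcase
      have hZ : (k:ℤ)^2*(2*A.2) ≤ A.1*4 := by exact_mod_cast hcase
      nlinarith [hZ]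
    have hkb : (k:ℝ)*(A.2:ℝ) = (((k:ℤ)*A.2 : ℤ):ℝ)/(((1:ℤ)):ℝ) := by push_cast; ring
    have hlow : ∀ r ∈ E, (k:ℝ)*(A.2:ℝ) ≤ r := by
      rintro r ⟨C, hC, rfl⟩
      rw [hIval, hkb]
      by_cases hF : C = S.fibre x
      · subst hF
        refine transfer ((k:ℤ)*A.2) 1 (S.fibre x) one_pos (S.fibre_mem x) ?_
        rw [S.fibre_num, S.fibre_mult]
        have hz := kb_le_aZ A.1 A.2 (k:ℤ) (n0:ℤ) hb hn0n hksZ hTodd hTeven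
        push_cast
        nlinarith [hz]
      · by_cases hB' : C = Bk
        · subst hB'
          refine transfer ((k:ℤ)*A.2) 1 _ one_pos hBmem ?_
          rw [hBnum, hBmult]
          push_cast
          nlinarith []
        · by_cases hCj : ∃ j:ℕ, 1 ≤ j ∧ 2*j < k ∧ C = Cn j
          · obtain ⟨j, hj1, hj2, rfl⟩ := hCj
            refine transfer ((k:ℤ)*A.2) 1 (Cn j) one_pos (hCmem j hj1 hj2) ?_
            rw [hCnum j hj1 hj2, hCmult j hj1 hj2]
            have hz := kb_le_qZ A.1 A.2 (k:ℤ) (n0:ℤ) (j:ℤ) hb (Int.natCast_nonneg _) hn0n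
              hksZ hTodd hTeven
            push_cast
            nlinarith [hz]
          · push_neg at hCj
            obtain ⟨hAllv, hcB⟩ := hcons C hC hF hB' hCj
            refine transfer ((k:ℤ)*A.2) 1 C one_pos hC ?_
            have hz := genLB2 A.1 A.2 (k:ℤ) (n0:ℤ) (S.num C).1 (S.num C).2
              (S.mult x C : ℤ) hb (hm1 C hC) hn0n hksZ hTodd hTeven hAllv hcB
            nlinarith [hz]
    rw [hsesh]
    exact le_antisymm (csInf_le ⟨(k:ℝ)*(A.2:ℝ), fun r hr => hlow r hr⟩ memB)
      (le_csInf ⟨_, memF⟩ hlow)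
end
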